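/- Let 1 < α < 3 and t > 0, and let f(x) = f_{α,1/2,t}(x) = (t cos(π/(2α))/π) · (x² + t²)/(x⁴ + t⁴ + 2x²t² cos(π/α)). Then 2 sin(π/(2α)) − 1 > 0, the derivative f′ vanishes exactly at the three points x = 0 and x = ± t √(2 sin(π/(2α)) − 1), f has strict local maxima at x = ± t √(2 sin(π/(2α)) − 1), and f has a strict local minimum at x = 0; in particular f is bimodal. -/

import Mathlib

open Real Filter Topology

/-- The mixture-of-asymmetric-Cauchy probability density `f_{α,p,t}`. -/
noncomputable def cauchyMixDensity (α p t x : ℝ) : ℝ :=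
  (t * Real.cos (π / (2 * α)) / π) *
    ((x ^ 2 + t ^ 2 + 2 * (2 * p - 1) * x * t * Real.sin (π / (2 * α))) /
      (x ^ 4 + t ^ 4 + 2 * x ^ 2 * t ^ 2 * Real.cos (π / α)))

/-!
Write `θ = π/(2α)` and `s = sin θ`. Since `cos(π/α) = 1 - 2s²`, the symmetric density is a positive
multiple of `(x² + t²) / Q(x)` with `Q(x) = (x² - t²)² + 4x²t²(1 - s²) > 0`, and the numerator of
its derivative factors as `-2x (x² - (2s-1)t²)(x² + (2s+1)t²)`. For `1 < α < 3` we have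
`1/2 < s < 1`, so the critical points are `0` and `±x₀` with `x₀² = (2s-1)t²`. Two cross-multiplied
identities settle the nature of these points:
`(x₀² + t²) Q(y) - Q(x₀)(y² + t²) = 2st²(y² - x₀²)²` makes `±x₀` global (hence strict local) maxima,
and `(y² + t²) Q(0) - Q(y) t² = t²y²((4s² - 1)t² - y²)` makes `0` a strict local minimum.
-/

namespace CauchyMix

variable {s t x y z : ℝ}

/-- Up to the factor `t cos θ / π`, the density `f_{α,1/2,t}` with `s = sin θ`, `θ = π/(2α)`. -/
noncomputable def symmProfile (s t x : ℝ) : ℝ :=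
  (x ^ 2 + t ^ 2) / (x ^ 4 + t ^ 4 + 2 * x ^ 2 * t ^ 2 * (1 - 2 * s ^ 2))

theorem cauchyMixDensity_half_eq (α t : ℝ) :
    cauchyMixDensity α (1 / 2) t =
      fun x => t * cos (π / (2 * α)) / π * symmProfile (sin (π / (2 * α))) t x := by
  have hcos : cos (π / α) = 1 - 2 * sin (π / (2 * α)) ^ 2 := by
    rw [← cos_two_mul_eq_one_sub]; ring_nf
  funext x
  simp only [cauchyMixDensity, symmProfile, hcos]
  norm_num

theorem symmProfile_den_pos (hs : s ^ 2 < 1) (ht : t ≠ 0) (x : ℝ) :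
    0 < x ^ 4 + t ^ 4 + 2 * x ^ 2 * t ^ 2 * (1 - 2 * s ^ 2) := by
  have hsq : x ^ 4 + t ^ 4 + 2 * x ^ 2 * t ^ 2 * (1 - 2 * s ^ 2) =
      (x ^ 2 - t ^ 2) ^ 2 + 4 * x ^ 2 * t ^ 2 * (1 - s ^ 2) := by ring
  rcases eq_or_ne x 0 with rfl | hx
  · rw [hsq]; simp; positivity
  · have : 0 < 1 - s ^ 2 := by linarith
    rw [hsq]; positivity

theorem hasDerivAt_symmProfile (hs : s ^ 2 < 1) (ht : t ≠ 0) (x : ℝ) :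
    HasDerivAt (symmProfile s t)
      (-2 * x * (x ^ 2 - (2 * s - 1) * t ^ 2) * (x ^ 2 + (2 * s + 1) * t ^ 2) /
        (x ^ 4 + t ^ 4 + 2 * x ^ 2 * t ^ 2 * (1 - 2 * s ^ 2)) ^ 2) x := by
  have hnum : HasDerivAt (fun x : ℝ => x ^ 2 + t ^ 2) (2 * x) x := by
    simpa using (hasDerivAt_pow 2 x).add_const (t ^ 2)
  have hden : HasDerivAt (fun x : ℝ => x ^ 4 + t ^ 4 + 2 * x ^ 2 * t ^ 2 * (1 - 2 * s ^ 2))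
      (4 * x ^ 3 + 4 * x * t ^ 2 * (1 - 2 * s ^ 2)) x := by
    have := (((hasDerivAt_pow 4 x).add_const (t ^ 4)).add
      (((hasDerivAt_pow 2 x).const_mul 2).mul_const (t ^ 2 * (1 - 2 * s ^ 2))))
    refine (this.congr_deriv (by push_cast; ring)).congr_of_eventuallyEq
      (Eventually.of_forall fun y => ?_)
    simp only [Pi.add_apply]; ring
  exact (hnum.div hden (symmProfile_den_pos hs ht x).ne').congr_deriv (by ring)

theorem deriv_symmProfile_eq_zero_iff (hs : 1 / 2 ≤ s) (hs1 : s < 1) (ht : t ≠ 0) :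
    deriv (symmProfile s t) x = 0 ↔
      x = 0 ∨ x = t * √(2 * s - 1) ∨ x = -(t * √(2 * s - 1)) := by
  have hs2 : s ^ 2 < 1 := by nlinarith
  have hroot : (t * √(2 * s - 1)) ^ 2 = (2 * s - 1) * t ^ 2 := by
    rw [mul_pow, sq_sqrt (by linarith)]; ring
  have hpos : x ^ 2 + (2 * s + 1) * t ^ 2 ≠ 0 := by positivity
  rw [(hasDerivAt_symmProfile hs2 ht x).deriv, div_eq_zero_iff,
    or_iff_left (pow_ne_zero 2 (symmProfile_den_pos hs2 ht x).ne'), mul_eq_zero,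
    or_iff_left hpos, mul_eq_zero, mul_eq_zero, sub_eq_zero, ← hroot, sq_eq_sq_iff_eq_or_eq_neg]
  norm_num [or_assoc]

theorem symmProfile_lt_of_sq_eq (hs : 0 < s) (hs1 : s < 1) (ht : t ≠ 0)
    (hz : z ^ 2 = (2 * s - 1) * t ^ 2) (hy : y ^ 2 ≠ z ^ 2) :
    symmProfile s t y < symmProfile s t z := by
  have hs2 : s ^ 2 < 1 := by nlinarith
  have hQy := symmProfile_den_pos hs2 ht y
  have hQz := symmProfile_den_pos hs2 ht z
  have key : (z ^ 2 + t ^ 2) * (y ^ 4 + t ^ 4 + 2 * y ^ 2 * t ^ 2 * (1 - 2 * s ^ 2)) -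
      (y ^ 2 + t ^ 2) * (z ^ 4 + t ^ 4 + 2 * z ^ 2 * t ^ 2 * (1 - 2 * s ^ 2)) =
      2 * s * t ^ 2 * (y ^ 2 - z ^ 2) ^ 2 := by
    rw [show z ^ 4 = (z ^ 2) ^ 2 by ring, hz]; ring
  have : 0 < 2 * s * t ^ 2 * (y ^ 2 - z ^ 2) ^ 2 := by
    have := sub_ne_zero.mpr hy; positivity
  rw [symmProfile, symmProfile, div_lt_div_iff₀ hQy hQz]
  linarith

theorem symmProfile_zero_lt (hs : s ^ 2 < 1) (ht : t ≠ 0) (hy0 : y ≠ 0)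
    (hy : y ^ 2 < (4 * s ^ 2 - 1) * t ^ 2) :
    symmProfile s t 0 < symmProfile s t y := by
  have hQy := symmProfile_den_pos hs ht y
  have hQ0 := symmProfile_den_pos hs ht 0
  have key : (y ^ 2 + t ^ 2) * (0 ^ 4 + t ^ 4 + 2 * 0 ^ 2 * t ^ 2 * (1 - 2 * s ^ 2)) -
      (0 ^ 2 + t ^ 2) * (y ^ 4 + t ^ 4 + 2 * y ^ 2 * t ^ 2 * (1 - 2 * s ^ 2)) =
      t ^ 2 * (y ^ 2 * ((4 * s ^ 2 - 1) * t ^ 2 - y ^ 2)) := by ring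
  have : 0 < t ^ 2 * (y ^ 2 * ((4 * s ^ 2 - 1) * t ^ 2 - y ^ 2)) := by
    have := sub_pos.mpr hy; positivity
  rw [symmProfile, symmProfile, div_lt_div_iff₀ hQ0 hQy]
  linarith

theorem eventually_symmProfile_lt_of_sq_eq (hs : 0 < s) (hs1 : s < 1) (ht : t ≠ 0)
    (hz : z ^ 2 = (2 * s - 1) * t ^ 2) (hz0 : z ≠ 0) :
    ∀ᶠ y in 𝓝[≠] z, symmProfile s t y < symmProfile s t z := by
  have hneg : ∀ᶠ y in 𝓝[≠] z, y ≠ -z :=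
    eventually_nhdsWithin_of_eventually_nhds (eventually_ne_nhds (by contrapose! hz0; linarith))
  filter_upwards [hneg, self_mem_nhdsWithin] with y hy hyz
  refine symmProfile_lt_of_sq_eq hs hs1 ht hz fun h => ?_
  rcases sq_eq_sq_iff_eq_or_eq_neg.mp h with h | h
  exacts [hyz h, hy h]

theorem eventually_symmProfile_zero_lt (hs : 1 / 2 < s) (hs1 : s < 1) (ht : t ≠ 0) :
    ∀ᶠ y in 𝓝[≠] (0 : ℝ), symmProfile s t 0 < symmProfile s t y := by
  have hsmall : ∀ᶠ y in 𝓝 (0 : ℝ), y ^ 2 < (4 * s ^ 2 - 1) * t ^ 2 := by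
    have : 0 < 4 * s ^ 2 - 1 := by nlinarith
    have : (0 : ℝ) ^ 2 < (4 * s ^ 2 - 1) * t ^ 2 := by rw [zero_pow two_ne_zero]; positivity
    exact (continuous_pow 2).continuousAt.eventually_lt continuousAt_const this
  filter_upwards [eventually_nhdsWithin_of_eventually_nhds hsmall, self_mem_nhdsWithin]
    with y hy hy0
  exact symmProfile_zero_lt (by nlinarith) ht hy0 hy

theorem sin_cos_pi_div_two_mul_bounds {α : ℝ} (hα1 : 1 < α) (hα3 : α < 3) :
    1 / 2 < sin (π / (2 * α)) ∧ sin (π / (2 * α)) < 1 ∧ 0 < cos (π / (2 * α)) := by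
  have hlt : π / (2 * α) < π / 2 := div_lt_div_of_pos_left pi_pos two_pos (by linarith)
  have hgt : π / 6 < π / (2 * α) := div_lt_div_of_pos_left pi_pos (by positivity) (by linarith)
  have hpos : 0 < π / (2 * α) := by positivity
  refine ⟨?_, ?_, cos_pos_of_mem_Ioo ⟨by linarith, hlt⟩⟩
  · simpa [sin_pi_div_six] using
      sin_lt_sin_of_lt_of_le_pi_div_two (by linarith [pi_pos]) hlt.le hgt
  · simpa using sin_lt_sin_of_lt_of_le_pi_div_two (by linarith) le_rfl hlt

end CauchyMix

open CauchyMix in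
/-- For `1 < α < 3` and `t > 0`, the symmetric density
`f = f_{α,1/2,t}` is bimodal: `2 sin(π/(2α)) − 1 > 0`, the derivative of `f`
vanishes exactly at `0` and `± t √(2 sin(π/(2α)) − 1)`, `f` has strict local
maxima at `± t √(2 sin(π/(2α)) − 1)` and a strict local minimum at `0`. -/
theorem cauchyMix_symmetric_bimodal (α t : ℝ) (hα1 : 1 < α) (hα3 : α < 3)
    (ht : 0 < t) :
    0 < 2 * Real.sin (π / (2 * α)) - 1 ∧
    (∀ x : ℝ, deriv (cauchyMixDensity α (1 / 2) t) x = 0 ↔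
      x = 0 ∨ x = t * Real.sqrt (2 * Real.sin (π / (2 * α)) - 1) ∨
        x = -(t * Real.sqrt (2 * Real.sin (π / (2 * α)) - 1))) ∧
    (∀ᶠ y in 𝓝[≠] (t * Real.sqrt (2 * Real.sin (π / (2 * α)) - 1)),
      cauchyMixDensity α (1 / 2) t y <
        cauchyMixDensity α (1 / 2) t
          (t * Real.sqrt (2 * Real.sin (π / (2 * α)) - 1))) ∧
    (∀ᶠ y in 𝓝[≠] (-(t * Real.sqrt (2 * Real.sin (π / (2 * α)) - 1))),
      cauchyMixDensity α (1 / 2) t y <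
        cauchyMixDensity α (1 / 2) t
          (-(t * Real.sqrt (2 * Real.sin (π / (2 * α)) - 1)))) ∧
    (∀ᶠ y in 𝓝[≠] (0 : ℝ),
      cauchyMixDensity α (1 / 2) t 0 < cauchyMixDensity α (1 / 2) t y) := by
  obtain ⟨hs, hs1, hcos⟩ := sin_cos_pi_div_two_mul_bounds hα1 hα3
  have hK : 0 < t * cos (π / (2 * α)) / π := by positivity
  rw [cauchyMixDensity_half_eq]
  set s := sin (π / (2 * α))
  set x₀ := t * √(2 * s - 1)
  have hx₀ : x₀ ^ 2 = (2 * s - 1) * t ^ 2 := by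
    rw [mul_pow, sq_sqrt (by linarith)]; ring
  have hx₀ne : x₀ ≠ 0 := (mul_pos ht (sqrt_pos.mpr (by linarith))).ne'
  have hmax {z : ℝ} (hz : z ^ 2 = (2 * s - 1) * t ^ 2) (hz0 : z ≠ 0) :=
    (eventually_symmProfile_lt_of_sq_eq (by linarith) hs1 ht.ne' hz hz0).mono
      fun y hy => mul_lt_mul_of_pos_left hy hK
  refine ⟨by linarith, fun x => ?_, hmax hx₀ hx₀ne,
    hmax (by rw [neg_sq, hx₀]) (neg_ne_zero.mpr hx₀ne),
    (eventually_symmProfile_zero_lt hs hs1 ht.ne').mono fun y hy => mul_lt_mul_of_pos_left hy hK⟩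
  rw [deriv_const_mul_field', mul_eq_zero, or_iff_right hK.ne']
  exact deriv_symmProfile_eq_zero_iff hs.le hs1 ht.ne'
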